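/- Suppose m = n (that is, k = 1). An allocation in which each agent receives exactly one item is Pareto optimal if and only if it is the outcome of some serial dictatorship, i.e., some policy in which every agent has exactly one turn. -/

import Mathlib

open Finset
open scoped Classical

/-- The most preferred item of a nonempty finset w.r.t. a linear order
(greater means more preferred). -/
noncomputable def favorite {ι : Type} (L : LinearOrder ι) (S : Finset ι) (h : S.Nonempty) : ι :=
  @Finset.max' ι L S h

/-- Sequential allocation: process the turns in order; at each turn the agent whose
turn it is picks her most preferred item among the items not yet allocated.
Returns the list of (agent, item) picks, in order. -/
noncomputable def seqAlloc {n : ℕ} {ι : Type} [DecidableEq ι]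
    (P : Fin n → LinearOrder ι) : List (Fin n) → Finset ι → List (Fin n × ι)
  | [], _ => []
  | a :: rest, S =>
    if h : S.Nonempty then
      (a, favorite (P a) S h) :: seqAlloc P rest (S.erase (favorite (P a) S h))
    else []

/-- `M` is the outcome of the policy `π`: every item is picked by the agent that
`M` assigns it to. -/
def IsOutcome {n : ℕ} {ι : Type} [Fintype ι] [DecidableEq ι]
    (P : Fin n → LinearOrder ι) (π : List (Fin n)) (M : ι → Fin n) : Prop :=
  ∀ o : ι, (M o, o) ∈ seqAlloc P π Finset.univ

/-- The set of items that agent `a` picks under the policy `π`. -/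
noncomputable def receives {n : ℕ} {ι : Type} [Fintype ι] [DecidableEq ι]
    (P : Fin n → LinearOrder ι) (π : List (Fin n)) (a : Fin n) : Finset ι :=
  Finset.univ.filter (fun o => (a, o) ∈ seqAlloc P π Finset.univ)

/-- An allocation `M` is Pareto optimal if there is no bijection `f` of the items such
that every agent weakly prefers `f o` to `o` for each item `o` she gets, with at least
one strict preference. -/
def ParetoOptimal {n : ℕ} {ι : Type} (P : Fin n → LinearOrder ι) (M : ι → Fin n) : Prop :=
  ¬ ∃ f : ι ≃ ι, (∀ o : ι, (P (M o)).le o (f o)) ∧ (∃ o : ι, (P (M o)).lt o (f o))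

/-- A policy is balanced if every agent has exactly `k` turns. -/
def BalancedPolicy {n : ℕ} (k : ℕ) (π : List (Fin n)) : Prop :=
  ∀ a : Fin n, π.count a = k

/-- An allocation is balanced if every agent receives exactly `k` items. -/
def BalancedAlloc {n : ℕ} {ι : Type} [Fintype ι] (k : ℕ) (M : ι → Fin n) : Prop :=
  ∀ a : Fin n, (Finset.univ.filter (fun o => M o = a)).card = k

/-- A policy is recursively balanced if it splits into `k` consecutive rounds of `n`
turns each, every agent having exactly one turn in each round. -/
def RecBalanced (n k : ℕ) (π : List (Fin n)) : Prop :=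
  ∃ rounds : List (List (Fin n)), rounds.length = k ∧
    (∀ r ∈ rounds, r.length = n ∧ ∀ a : Fin n, r.count a = 1) ∧
    π = rounds.flatten

/-- A strict alternation policy: every one of the `k` rounds uses the same order `σ`
over the agents. -/
def StrictAlt (n k : ℕ) (π : List (Fin n)) : Prop :=
  ∃ σ : List (Fin n), σ.length = n ∧ (∀ a : Fin n, σ.count a = 1) ∧
    π = (List.replicate k σ).flatten

/-- A balanced alternation policy: odd-numbered rounds use the order `σ` over the agents
and even-numbered rounds use its reverse. -/
def BalAlt (n k : ℕ) (π : List (Fin n)) : Prop :=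
  ∃ σ : List (Fin n), σ.length = n ∧ (∀ a : Fin n, σ.count a = 1) ∧
    π = ((List.range k).map (fun r => if r % 2 = 0 then σ else σ.reverse)).flatten

/-- `p j i` (for `1 ≤ i ≤ k`) is the item ranked `i`-th by agent `j` among the items `M`
allocates to `j`: it is allocated to `j`, and exactly `i - 1` of the items allocated
to `j` are strictly preferred to it by agent `j`. -/
def IsRankingOf {n : ℕ} {ι : Type} [Fintype ι] (P : Fin n → LinearOrder ι) (k : ℕ)
    (M : ι → Fin n) (p : Fin n → ℕ → ι) : Prop :=
  ∀ (j : Fin n) (i : ℕ), 1 ≤ i → i ≤ k →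
    M (p j i) = j ∧
    (Finset.univ.filter (fun o => M o = j ∧ (P j).lt (p j i) o)).card = i - 1

/-- Condition 3: for all `1 ≤ t < s ≤ k` and all agents `j, j'`, agent `j` strictly
prefers `p j t` to `p j' s`. -/
def Cond3 {n : ℕ} {ι : Type} (P : Fin n → LinearOrder ι) (k : ℕ) (p : Fin n → ℕ → ι) : Prop :=
  ∀ t s : ℕ, 1 ≤ t → t < s → s ≤ k → ∀ j j' : Fin n, (P j).lt (p j' s) (p j t)

/-- The edge relation of the directed graph `G_M`: for odd `i ≤ k` an edge `a → b`
whenever `b` strictly prefers `p a i` to `p b i`, and for even `i ≤ k` an edge `a → b`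
whenever `a` strictly prefers `p b i` to `p a i`. -/
def GM {n : ℕ} {ι : Type} (P : Fin n → LinearOrder ι) (k : ℕ) (p : Fin n → ℕ → ι)
    (a b : Fin n) : Prop :=
  (∃ i : ℕ, 1 ≤ i ∧ i ≤ k ∧ i % 2 = 1 ∧ (P b).lt (p b i) (p a i)) ∨
  (∃ i : ℕ, 1 ≤ i ∧ i ≤ k ∧ i % 2 = 0 ∧ (P a).lt (p a i) (p b i))

/-- The edge relation of the directed graph `H_M`: for each `i ≤ k` an edge `a → b`
whenever `b` strictly prefers `p a i` to `p b i`. -/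
def HM {n : ℕ} {ι : Type} (P : Fin n → LinearOrder ι) (k : ℕ) (p : Fin n → ℕ → ι)
    (a b : Fin n) : Prop :=
  ∃ i : ℕ, 1 ≤ i ∧ i ≤ k ∧ (P b).lt (p b i) (p a i)

/-- The `k` most preferred items of agent `j`: those items with fewer than `k` items
strictly preferred to them by `j`. -/
noncomputable def topItems {n : ℕ} {ι : Type} [Fintype ι] (P : Fin n → LinearOrder ι)
    (k : ℕ) (j : Fin n) : Finset ι :=
  Finset.univ.filter (fun o => (Finset.univ.filter (fun o' => (P j).lt o o')).card < k)

/-- The rank of item `o` in agent `j`'s preference (the most preferred item has rank 1). -/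
noncomputable def rankOf {n : ℕ} {ι : Type} [Fintype ι] (P : Fin n → LinearOrder ι)
    (j : Fin n) (o : ι) : ℕ :=
  (Finset.univ.filter (fun o' => (P j).lt o o')).card + 1


/-!
An allocation is Pareto optimal exactly when its items can be listed so that each item is its
owner's favourite among the items not listed before it; the owners, in that order, form the
policy. Such a list exists because in every nonempty set of items some item is its owner's
favourite in the set: otherwise sending each item to its owner's favourite is a strictly
improving map of the set to itself, and on one of its cycles it gives an improving permutation.
Conversely, a weakly improving bijection must fix the first item picked (it is its picker's
favourite among all items), hence, inductively, every item.
-/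

open Function

namespace Function

theorem exists_iterate_mem_periodicPts {α : Type*} [Finite α] (f : α → α) (x : α) :
    ∃ n, f^[n] x ∈ periodicPts f := by
  obtain ⟨m, n, hne, heq⟩ := Finite.exists_ne_map_eq_of_infinite (f^[·] x)
  wlog hmn : m < n generalizing m n
  · exact this n m hne.symm heq.symm (hne.lt_or_gt.resolve_left hmn)
  refine ⟨m, mk_mem_periodicPts (Nat.sub_pos_of_lt hmn) ?_⟩
  change f^[n - m] (f^[m] x) = f^[m] x
  rw [← iterate_add_apply, Nat.sub_add_cancel hmn.le]
  exact heq.symm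

theorem bijective_of_card_filter_eq_one {α β : Type*} [Fintype α] [DecidableEq β] {f : α → β}
    (h : ∀ b, (univ.filter (fun a => f a = b)).card = 1) : Bijective f := by
  refine (bijective_iff_existsUnique f).2 fun b => ?_
  obtain ⟨a, ha⟩ := card_eq_one.1 (h b)
  simp only [eq_singleton_iff_unique_mem, mem_filter, mem_univ, true_and] at ha
  exact ⟨a, ha⟩

end Function

theorem favorite_mem {ι : Type} (L : LinearOrder ι) {S : Finset ι} (h : S.Nonempty) :
    favorite L S h ∈ S :=
  @max'_mem ι L S h

theorem le_favorite {ι : Type} (L : LinearOrder ι) {S : Finset ι} (h : S.Nonempty) {o : ι}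
    (ho : o ∈ S) : L.le o (favorite L S h) :=
  @le_max' ι L S o ho

section SequentialAllocation

variable {n : ℕ} {ι : Type} [DecidableEq ι] (P : Fin n → LinearOrder ι)

theorem seqAlloc_cons_of_nonempty (a : Fin n) (π : List (Fin n)) {S : Finset ι}
    (hS : S.Nonempty) :
    seqAlloc P (a :: π) S =
      (a, favorite (P a) S hS) :: seqAlloc P π (S.erase (favorite (P a) S hS)) := by
  rw [seqAlloc, dif_pos hS]

theorem mem_of_mem_seqAlloc {π : List (Fin n)} {S : Finset ι} {b : Fin n} {o : ι}
    (h : (b, o) ∈ seqAlloc P π S) : o ∈ S := by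
  induction π generalizing S with
  | nil => simp [seqAlloc] at h
  | cons a π ih =>
    by_cases hS : S.Nonempty
    · rw [seqAlloc_cons_of_nonempty P a π hS, List.mem_cons, Prod.mk.injEq] at h
      rcases h with ⟨-, rfl⟩ | h
      · exact favorite_mem _ hS
      · exact mem_of_mem_erase (ih h)
    · simp [seqAlloc, hS] at h

theorem apply_eq_self_of_mem_seqAlloc {M : ι → Fin n} {f : ι → ι} (hf : Injective f)
    (hle : ∀ o, (P (M o)).le o (f o)) (π : List (Fin n)) {S : Finset ι}
    (hfS : ∀ o ∈ S, f o ∈ S) (hpicked : ∀ o ∈ S, (M o, o) ∈ seqAlloc P π S) :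
    ∀ o ∈ S, f o = o := by
  induction π generalizing S with
  | nil => exact fun o ho => absurd (hpicked o ho) List.not_mem_nil
  | cons a π ih =>
    intro o ho
    have hS : S.Nonempty := ⟨o, ho⟩
    set v := favorite (P a) S hS
    have hseq := seqAlloc_cons_of_nonempty P a π hS
    have hMv : M v = a := by
      have h := hpicked v (favorite_mem _ hS)
      rw [hseq, List.mem_cons, Prod.mk.injEq] at h
      rcases h with ⟨h, -⟩ | h
      · exact h
      · exact absurd (mem_of_mem_seqAlloc P h) (notMem_erase v S)
    have hfv : f v = v := by
      have hvf := hle v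
      rw [hMv] at hvf
      let := P a
      exact le_antisymm (le_favorite _ hS (hfS v (favorite_mem _ hS))) hvf
    by_cases hov : o = v
    · rw [hov, hfv]
    refine ih (fun x hx => ?_) (fun x hx => ?_) o (mem_erase.2 ⟨hov, ho⟩)
    · obtain ⟨hxv, hxS⟩ := mem_erase.1 hx
      exact mem_erase.2 ⟨fun h => hxv (hf (h.trans hfv.symm)), hfS x hxS⟩
    · have h := hpicked x (mem_of_mem_erase hx)
      rw [hseq, List.mem_cons, Prod.mk.injEq] at h
      exact h.resolve_left fun h => (mem_erase.1 hx).1 h.2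

variable {P}

/-- `g` permutes its periodic points, so it extends to a permutation of the items fixing all
others. -/
theorem ParetoOptimal.apply_eq_self_of_mem_periodicPts {M : ι → Fin n} (hPO : ParetoOptimal P M)
    {g : ι → ι} (hg : ∀ o ∈ periodicPts g, (P (M o)).le o (g o)) {x : ι}
    (hx : x ∈ periodicPts g) : g x = x := by
  by_contra hgx
  let e := Equiv.Perm.ofSubtype ((bijOn_periodicPts g).equiv g)
  have he : ∀ o ∈ periodicPts g, e o = g o := fun o ho =>
    Equiv.Perm.ofSubtype_apply_of_mem _ ho
  refine hPO ⟨e, fun o => ?_, x, ?_⟩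
  · by_cases ho : o ∈ periodicPts g
    · exact he o ho ▸ hg o ho
    · rw [Equiv.Perm.ofSubtype_apply_of_not_mem _ ho]
      exact (P (M o)).le_refl o
  · let := P (M x)
    exact he x hx ▸ lt_of_le_of_ne (hg x hx) (Ne.symm hgx)

theorem IsOutcome.paretoOptimal [Fintype ι] {π : List (Fin n)} {M : ι → Fin n}
    (h : IsOutcome P π M) : ParetoOptimal P M := by
  rintro ⟨f, hle, o, hlt⟩
  have hfo := apply_eq_self_of_mem_seqAlloc P f.injective hle π (fun o _ => mem_univ (f o))
    (fun o _ => h o) o (mem_univ o)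
  let := P (M o)
  exact (hfo ▸ hlt).false

variable [Finite ι]

theorem ParetoOptimal.exists_favorite_eq_self {M : ι → Fin n} (hPO : ParetoOptimal P M)
    {T : Finset ι} (hT : T.Nonempty) : ∃ o ∈ T, favorite (P (M o)) T hT = o := by
  let g : ι → ι := fun o => favorite (P (M o)) T hT
  have hperT : ∀ o ∈ periodicPts g, o ∈ T := fun o ho => by
    obtain ⟨y, rfl⟩ := periodicPts_subset_range ho
    exact favorite_mem _ hT
  obtain ⟨k, hk⟩ := exists_iterate_mem_periodicPts g hT.choose
  exact ⟨_, hperT _ hk, hPO.apply_eq_self_of_mem_periodicPts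
    (fun o ho => le_favorite _ hT (hperT o ho)) hk⟩

theorem ParetoOptimal.exists_list_seqAlloc_eq {M : ι → Fin n} (hPO : ParetoOptimal P M)
    (T : Finset ι) : ∃ l : List ι, l.Nodup ∧ (∀ o, o ∈ l ↔ o ∈ T) ∧
      seqAlloc P (l.map M) T = l.map fun o => (M o, o) := by
  induction T using Finset.strongInduction with
  | H T ih =>
    rcases T.eq_empty_or_nonempty with rfl | hT
    · exact ⟨[], List.nodup_nil, by simp, by simp [seqAlloc]⟩
    obtain ⟨o₀, ho₀, hfav⟩ := hPO.exists_favorite_eq_self hT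
    obtain ⟨l, hnd, hmem, hseq⟩ := ih (T.erase o₀) (erase_ssubset ho₀)
    refine ⟨o₀ :: l, List.nodup_cons.2 ⟨fun h => ?_, hnd⟩, fun o => ?_, ?_⟩
    · exact notMem_erase o₀ T ((hmem o₀).1 h)
    · rw [List.mem_cons, hmem, mem_erase]
      by_cases h : o = o₀ <;> simp [h, ho₀]
    · rw [List.map_cons, seqAlloc_cons_of_nonempty P _ _ hT, hfav, hseq, List.map_cons]

end SequentialAllocation

theorem serial_dictatorship_characterization_general
    {ι : Type} [Fintype ι] [DecidableEq ι] {n : ℕ}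
    (P : Fin n → LinearOrder ι) (M : ι → Fin n)
    (hM : ∀ a : Fin n, (Finset.univ.filter (fun o => M o = a)).card = 1) :
    ParetoOptimal P M ↔
      ∃ π : List (Fin n), (∀ a : Fin n, π.count a = 1) ∧ IsOutcome P π M := by
  have hbij := bijective_of_card_filter_eq_one hM
  constructor
  · intro hPO
    obtain ⟨l, hnd, hmem, hseq⟩ := hPO.exists_list_seqAlloc_eq univ
    refine ⟨l.map M, fun a => ?_, fun o => ?_⟩
    · obtain ⟨o, rfl⟩ := hbij.2 a
      rw [List.count_map_of_injective _ _ hbij.1]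
      exact List.count_eq_one_of_mem hnd ((hmem o).2 (mem_univ o))
    · rw [hseq]
      exact List.mem_map_of_mem ((hmem o).2 (mem_univ o))
  · rintro ⟨π, -, hπ⟩
    exact hπ.paretoOptimal

/-- For `m = n` (`k = 1`), an allocation in which each agent receives
exactly one item is Pareto optimal iff it is the outcome of some serial dictatorship
(a policy in which every agent has exactly one turn). -/
theorem serial_dictatorship_characterization
    {ι : Type} [Fintype ι] [DecidableEq ι] {n : ℕ} (hn : 0 < n)
    (hcard : Fintype.card ι = n)
    (P : Fin n → LinearOrder ι) (M : ι → Fin n)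
    (hM : ∀ a : Fin n, (Finset.univ.filter (fun o => M o = a)).card = 1) :
    ParetoOptimal P M ↔
      ∃ π : List (Fin n), (∀ a : Fin n, π.count a = 1) ∧ IsOutcome P π M :=
  serial_dictatorship_characterization_general P M hM
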